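/- Prompt-LTL\X is stutter sensitive: there exist a Prompt-LTL\X formula φ (namely G F_p q) and two stutter-equivalent infinite words w, w' over {∅, {q}} such that w satisfies φ for some bound k (at position 0) but w' does not satisfy φ for any bound k. -/
import Mathlib


/-- Start position of the `i`-th block in a decomposition with block lengths `n`. -/
def blockStart (n : ℕ → ℕ) (i : ℕ) : ℕ := ∑ l ∈ Finset.range i, n l

/-- Position `j` belongs to the `i`-th block of the decomposition with lengths `n`. -/
def inBlock (n : ℕ → ℕ) (i j : ℕ) : Prop :=
  blockStart n i ≤ j ∧ j < blockStart n i + n i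

/-- `n` is a block decomposition of the infinite word `w`: all blocks are nonempty
and `w` is constant on each block. -/
def IsDecomp {α : Type*} (w : ℕ → α) (n : ℕ → ℕ) : Prop :=
  (∀ i, 1 ≤ n i) ∧ ∀ i j, inBlock n i j → w j = w (blockStart n i)

/-- The decompositions `n`, `m` of `w`, `w'` are `d`-compatible: corresponding blocks
carry the same letter and their lengths differ by a factor of at most `d`. -/
def Compat {α : Type*} (d : ℕ) (w w' : ℕ → α) (n m : ℕ → ℕ) : Prop :=
  IsDecomp w n ∧ IsDecomp w' m ∧
  (∀ i, n i ≤ d * m i) ∧ (∀ i, m i ≤ d * n i) ∧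
  ∀ i, w (blockStart n i) = w' (blockStart m i)

/-- `w` and `w'` are `d`-stutter equivalent. -/
def StutterEquiv {α : Type*} (d : ℕ) (w w' : ℕ → α) : Prop :=
  ∃ n m : ℕ → ℕ, Compat d w w' n m

/-- Membership in the position-correspondence map `f` induced by the decompositions
`n`, `m`: `j ∈ f(i)` iff `i` lies in the `y`-th block of `n` and `j` in the `y`-th
block of `m`, for some `y`. -/
def fmem (n m : ℕ → ℕ) (i j : ℕ) : Prop :=
  ∃ y, inBlock n y i ∧ inBlock m y j

/-- Prompt-LTL without Next: atoms, negated atoms, ∨, ∧, prompt-eventually, Until, Release. -/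
inductive PLTL (AP : Type*) : Type _
  | atom : AP → PLTL AP
  | natom : AP → PLTL AP
  | disj : PLTL AP → PLTL AP → PLTL AP
  | conj : PLTL AP → PLTL AP → PLTL AP
  | fp : PLTL AP → PLTL AP
  | untl : PLTL AP → PLTL AP → PLTL AP
  | rel : PLTL AP → PLTL AP → PLTL AP

/-- Semantics of Prompt-LTL\X over infinite words `w : ℕ → Set AP`, position `i`, bound `k`. -/
def sat {AP : Type*} (w : ℕ → Set AP) : ℕ → ℕ → PLTL AP → Prop
  | i, _, .atom a => a ∈ w i
  | i, _, .natom a => a ∉ w i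
  | i, k, .disj φ ψ => sat w i k φ ∨ sat w i k ψ
  | i, k, .conj φ ψ => sat w i k φ ∧ sat w i k ψ
  | i, k, .fp φ => ∃ j, i ≤ j ∧ j ≤ i + k ∧ sat w j k φ
  | i, k, .untl φ ψ => ∃ j, i ≤ j ∧ sat w j k ψ ∧ ∀ e, i ≤ e → e < j → sat w e k φ
  | i, k, .rel φ ψ => ∀ j, i ≤ j → sat w j k ψ ∨ ∃ e, i ≤ e ∧ e < j ∧ sat w e k φ

/-- Classical (unbounded) stutter equivalence: decompositions into blocks where
corresponding blocks carry the same letter, with no constraint on lengths. -/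
def ClassicStutterEquiv {α : Type*} (w w' : ℕ → α) : Prop :=
  ∃ n m : ℕ → ℕ, IsDecomp w n ∧ IsDecomp w' m ∧
    ∀ i, w (blockStart n i) = w' (blockStart m i)

/-- The formula G F_p q, with G expressed via Release against an unsatisfiable literal. -/
def GFpq : PLTL Unit :=
  .rel (.conj (.atom ()) (.natom ())) (.fp (.atom ()))

/-- positions of `q` in the second word -/
def qpos : ℕ → ℕ
  | 0 => 0
  | (i+1) => qpos i + i + 2

lemma qpos_mono : StrictMono qpos :=
  strictMono_nat_of_lt_succ (by intro n; simp [qpos]; omega)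

/-- the first word -/
def W : ℕ → Set Unit := fun j => {_u | j % 2 = 0}

/-- the second word -/
def W' : ℕ → Set Unit := fun j => {_u | ∃ i, qpos i = j}

lemma no_qpos_between {t j : ℕ} (h1 : qpos t < j) (h2 : j < qpos (t+1)) :
    ∀ i, qpos i ≠ j := by
  intro i hi
  rcases le_or_gt i t with h | h
  · have := qpos_mono.monotone h
    omega
  · have := qpos_mono.monotone (show t + 1 ≤ i by omega)
    omega

lemma W'_eq_of_not {a b : ℕ} (ha : ∀ i, qpos i ≠ a) (hb : ∀ i, qpos i ≠ b) :
    W' a = W' b := by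
  ext _u
  simp only [W', Set.mem_setOf_eq]
  constructor
  · rintro ⟨i, hi⟩; exact absurd hi (ha i)
  · rintro ⟨i, hi⟩; exact absurd hi (hb i)

/-- block lengths of the second word -/
def M : ℕ → ℕ := fun j => if j % 2 = 0 then 1 else j / 2 + 1

lemma blockStart_succ (n : ℕ → ℕ) (i : ℕ) :
    blockStart n (i+1) = blockStart n i + n i := by
  simp [blockStart, Finset.sum_range_succ]

lemma bsM : ∀ t, blockStart M (2*t) = qpos t ∧ blockStart M (2*t+1) = qpos t + 1 := by
  intro t
  induction t with
  | zero =>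
    refine ⟨by simp [blockStart, qpos], ?_⟩
    show blockStart M 1 = 1
    simp [blockStart, M]
  | succ t ih =>
    have hM1 : M (2*t+1) = t + 1 := by
      simp only [M]
      rw [if_neg (by omega)]
      congr 1
      omega
    have hM3 : M (2*(t+1)) = 1 := by
      simp only [M]
      rw [if_pos (by omega)]
    have e1 : blockStart M (2*(t+1)) = qpos (t+1) := by
      have h : 2*(t+1) = (2*t+1)+1 := by omega
      rw [h, blockStart_succ, ih.2, hM1]
      show _ = qpos t + t + 2
      omega
    exact ⟨e1, by rw [blockStart_succ, e1, hM3]⟩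

lemma bsOne : ∀ i, blockStart (fun _ => 1) i = i := by
  intro i; simp [blockStart]

/-- Prompt-LTL\X is stutter sensitive: there exist stutter-equivalent words over
{∅,{q}} such that one satisfies G F_p q for some bound k but the other for no bound k. -/
theorem promptLTL_stutter_sensitive :
    ∃ w w' : ℕ → Set Unit, ClassicStutterEquiv w w' ∧
      (∃ k, sat w 0 k GFpq) ∧ ∀ k, ¬ sat w' 0 k GFpq := by
  refine ⟨W, W', ?_, ?_, ?_⟩
  · -- stutter equivalence
    refine ⟨fun _ => 1, M, ⟨fun _ => le_refl 1, ?_⟩,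
      ⟨fun i => by simp only [M]; split <;> omega, ?_⟩, ?_⟩
    · intro i j hij
      obtain ⟨h1, h2⟩ := hij
      simp only [bsOne] at h1 h2 ⊢
      have : j = i := by omega
      rw [this]
    · -- W' constant on blocks of M
      intro i j hij
      obtain ⟨h1, h2⟩ := hij
      rcases Nat.even_or_odd i with ⟨t, ht⟩ | ⟨t, ht⟩
      · have hi : i = 2 * t := by omega
        subst hi
        have hM : M (2*t) = 1 := by simp only [M]; rw [if_pos (by omega)]
        rw [hM] at h2
        have : j = blockStart M (2*t) := by omega
        rw [this]
      · have hi : i = 2 * t + 1 := by omega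
        subst hi
        have hM : M (2*t+1) = t + 1 := by
          simp only [M]; rw [if_neg (by omega)]; congr 1; omega
        rw [hM] at h2
        rw [(bsM t).2] at h1 h2 ⊢
        have hq : qpos (t+1) = qpos t + t + 2 := rfl
        exact W'_eq_of_not (no_qpos_between (t := t) (by omega) (by omega))
          (no_qpos_between (t := t) (by omega) (by omega))
    · -- matching letters
      intro i
      rw [bsOne]
      rcases Nat.even_or_odd i with ⟨t, ht⟩ | ⟨t, ht⟩
      · have hi : i = 2 * t := by omega
        subst hi
        rw [(bsM t).1]
        ext _u
        simp only [W, W', Set.mem_setOf_eq]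
        constructor
        · intro _; exact ⟨t, rfl⟩
        · intro _; omega
      · have hi : i = 2 * t + 1 := by omega
        subst hi
        rw [(bsM t).2]
        have hq : qpos (t+1) = qpos t + t + 2 := rfl
        have hb : ∀ i', qpos i' ≠ qpos t + 1 :=
          no_qpos_between (t := t) (by omega) (by omega)
        ext _u
        simp only [W, W', Set.mem_setOf_eq]
        constructor
        · intro h; exact absurd h (by omega)
        · rintro ⟨i', hi'⟩; exact absurd hi' (hb i')
  · -- W satisfies GFpq with k = 1
    refine ⟨1, ?_⟩
    intro j _
    left
    rcases Nat.even_or_odd j with ⟨t, ht⟩ | ⟨t, ht⟩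
    · exact ⟨j, le_refl j, by omega, by simp [sat, W]; omega⟩
    · exact ⟨j+1, by omega, by omega, by simp [sat, W]; omega⟩
  · -- W' satisfies GFpq for no k
    intro k hk
    have hq2 : qpos (k+1+1) = qpos (k+1) + (k+1) + 2 := rfl
    rcases hk (qpos (k+1) + 1) (by omega) with h | ⟨e, _, _, he⟩
    · obtain ⟨j, hj1, hj2, hj3⟩ := h
      simp only [sat] at hj3
      obtain ⟨i', hi'⟩ := hj3
      exact no_qpos_between (t := k+1) (by omega) (by omega) i' hi'
    · simp [sat] at he
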